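/- In a semigroup with DIT elements x̄, ȳ, z̄ (satisfying x̄ * ȳ = ȳ and z̄ * ȳ = x̄), if x̄ * z̄ = ȳ * z̄ then x̄ = ȳ. -/

import Mathlib

theorem stmt {S : Type*} [Semigroup S] (x y z : S) (h1 : x * y = y) (h2 : z * y = x) (h : x * z = y * z) : x = y := by
  have hxx : x * x = y * x :=
    calc x * x = x * z * y := by rw [mul_assoc, h2]
      _ = y * x := by rw [h, mul_assoc, h2]
  have hyy : y * y = y :=
    calc y * y = y * x * y := by rw [mul_assoc, h1]
      _ = x * x * y := by rw [hxx]
      _ = y := by rw [mul_assoc, h1, h1]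
  calc x = z * y := h2.symm
    _ = z * y * y := by rw [mul_assoc, hyy]
    _ = y := by rw [h2, h1]
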